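/- arXiv:1405.4501 — 3 statements merged into one kernel-verified Lean document; each statement's English description precedes it below -/
import Mathlib

section
/- For p ≥ 3 even, c > 0 and t > 0, the principal-value limit lim_{R→∞} (1/2π) ∫_{-R}^{R} e^{ikx} e^{ict k^p} dk exists and equals (e^{iπ/(2p)}/2π) ∫_ℝ exp(i e^{iπ/(2p)} k x) exp(-ct k^p) dk, where the latter integral is absolutely convergent. -/
/-!
The integrand `f z = exp (i z x) * exp (i c t z ^ p)` is entire, so it has a primitive and the
integral over `[0, R]` equals the integral over the rotated ray `[0, R e^{iα}]`,
`α = π / (2p)`, minus the integral over the arc `R e^{iθ}`, `0 ≤ θ ≤ α`; the same holds on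
`[-R, 0]` for `f (-z)`, which for even `p` is the same kernel with `x` replaced by `-x`.
On the arc, `Re (i c t z ^ p) = -c t R ^ p sin (pθ) ≤ -(2 c t p / π) R ^ p θ` by Jordan's
inequality, which beats the linear term and makes the arc integral `O(1/R)`. On the rotated
ray, `(e^{iα} k) ^ p = i k ^ p` turns the oscillation into the decay `exp (-c t k ^ p)`,
integrable by comparison with a Gaussian.
-/

open MeasureTheory Real Complex Filter

theorem integral_comp_mul_deriv_eq_sub_of_hasDerivAt {F f : ℂ → ℂ}
    (hF : ∀ z, HasDerivAt F (f z) z) {γ γ' : ℝ → ℂ} (hγ : ∀ s, HasDerivAt γ (γ' s) s)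
    (hcont : Continuous fun s => f (γ s) * γ' s) (a b : ℝ) :
    ∫ s in a..b, f (γ s) * γ' s = F (γ b) - F (γ a) :=
  intervalIntegral.integral_eq_sub_of_hasDerivAt (fun s _ => (hF (γ s)).comp s (hγ s))
    (hcont.intervalIntegrable a b)

noncomputable def arcIntegral (f : ℂ → ℂ) (R α : ℝ) : ℂ :=
  ∫ θ in (0 : ℝ)..α, f (circleMap 0 R θ) * (circleMap 0 R θ * I)

theorem mul_integral_comp_mul_sub_integral_eq_arcIntegral {f : ℂ → ℂ} (hf : Differentiable ℂ f)
    (R α : ℝ) :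
    cexp (α * I) * (∫ k in (0 : ℝ)..R, f (cexp (α * I) * k)) - ∫ k in (0 : ℝ)..R, f k =
      arcIntegral f R α := by
  obtain ⟨F, hF⟩ := hf.isExactOn_univ
  replace hF : ∀ z, HasDerivAt F (f z) z := fun z => hF z (Set.mem_univ z)
  have ray : ∀ w : ℂ, ∫ k in (0 : ℝ)..R, f (w * k) * w = F (w * R) - F 0 := fun w => by
    simpa only [ofReal_zero, mul_zero] using
      integral_comp_mul_deriv_eq_sub_of_hasDerivAt hF (γ := fun k : ℝ => w * k)
      (fun s => by simpa using (ofRealCLM.hasDerivAt (x := s)).const_mul w)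
      ((hf.continuous.comp (by fun_prop)).mul continuous_const) 0 R
  have arc : arcIntegral f R α = F (circleMap 0 R α) - F (circleMap 0 R 0) :=
    integral_comp_mul_deriv_eq_sub_of_hasDerivAt hF (hasDerivAt_circleMap 0 R)
      ((hf.continuous.comp (continuous_circleMap 0 R)).mul
        ((continuous_circleMap 0 R).mul continuous_const)) 0 α
  have line : ∫ k in (0 : ℝ)..R, f k = F R - F 0 := by simpa using ray 1
  rw [arc, mul_comm, ← intervalIntegral.integral_mul_const, ray, line]
  simp [circleMap_zero, mul_comm]

theorem intervalIntegral_neg_self_eq_add_comp_neg {E : Type*} [NormedAddCommGroup E]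
    [NormedSpace ℝ E] {h : ℝ → E} (hh : Continuous h) (R : ℝ) :
    ∫ k in -R..R, h k = (∫ k in (0 : ℝ)..R, h k) + ∫ k in (0 : ℝ)..R, h (-k) := by
  rw [← intervalIntegral.integral_add_adjacent_intervals (b := 0) (hh.intervalIntegrable _ _)
    (hh.intervalIntegrable _ _), intervalIntegral.integral_comp_neg, neg_zero, add_comm]

theorem integral_eq_mul_integral_comp_mul_sub_arcIntegral {f : ℂ → ℂ} (hf : Differentiable ℂ f)
    (R α : ℝ) :
    ∫ k in -R..R, f k = cexp (α * I) * (∫ k in -R..R, f (cexp (α * I) * k)) -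
      arcIntegral f R α - arcIntegral (fun z => f (-z)) R α := by
  have hf_neg : Differentiable ℂ fun z => f (-z) := hf.comp differentiable_neg
  have hf_cont := hf.continuous
  rw [← mul_integral_comp_mul_sub_integral_eq_arcIntegral hf,
    ← mul_integral_comp_mul_sub_integral_eq_arcIntegral hf_neg,
    intervalIntegral_neg_self_eq_add_comp_neg (h := fun k : ℝ => f k) (by fun_prop),
    intervalIntegral_neg_self_eq_add_comp_neg (h := fun k : ℝ => f (cexp (α * I) * k))
      (by fun_prop)]
  simp only [ofReal_neg, mul_neg]
  ring

theorem tendsto_intervalIntegral_of_tendsto_arcIntegral {f : ℂ → ℂ} (hf : Differentiable ℂ f)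
    {α : ℝ} (hint : Integrable fun k : ℝ => f (cexp (α * I) * k))
    (harc : Tendsto (arcIntegral f · α) atTop (nhds 0))
    (harc_neg : Tendsto (arcIntegral (fun z => f (-z)) · α) atTop (nhds 0)) :
    Tendsto (fun R : ℝ => ∫ k in -R..R, f k) atTop
      (nhds (cexp (α * I) * ∫ k : ℝ, f (cexp (α * I) * k))) := by
  have hrot := (intervalIntegral_tendsto_integral hint tendsto_neg_atTop_atBot tendsto_id).const_mul
    (cexp (α * I))
  simpa only [sub_zero, id, ← integral_eq_mul_integral_comp_mul_sub_arcIntegral hf]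
    using (hrot.sub harc).sub harc_neg

theorem intervalIntegral_mul_exp_neg_sq_mul_le_inv {R : ℝ} (hR : 0 < R) (α : ℝ) :
    ∫ θ in (0 : ℝ)..α, R * Real.exp (-(R ^ 2 * θ)) ≤ R⁻¹ := by
  have hprim : ∀ θ ∈ Set.uIcc 0 α, HasDerivAt (fun θ => -(Real.exp (-(R ^ 2 * θ)) / R))
      (R * Real.exp (-(R ^ 2 * θ))) θ := fun θ _ => by
    refine (((hasDerivAt_id θ).const_mul (R ^ 2)).neg.exp.div_const R).neg.congr_deriv ?_
    field_simp
    simp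
  rw [intervalIntegral.integral_eq_sub_of_hasDerivAt hprim
    (Continuous.intervalIntegrable (by fun_prop) _ _)]
  have hpos : 0 < Real.exp (-(R ^ 2 * α)) / R := by positivity
  simp only [mul_zero, neg_zero, Real.exp_zero, one_div]
  linarith

theorem tendsto_arcIntegral_zero_of_norm_le_exp {f : ℂ → ℂ} {α : ℝ} (hα : 0 ≤ α)
    (hbound : ∀ᶠ R in atTop, ∀ θ ∈ Set.Icc 0 α,
      ‖f (circleMap 0 R θ)‖ ≤ Real.exp (-(R ^ 2 * θ))) :
    Tendsto (arcIntegral f · α) atTop (nhds 0) := by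
  refine squeeze_zero_norm' ?_ tendsto_inv_atTop_zero
  filter_upwards [hbound, eventually_gt_atTop 0] with R hbound hR
  calc ‖arcIntegral f R α‖ ≤ ∫ θ in (0 : ℝ)..α, R * Real.exp (-(R ^ 2 * θ)) := by
        refine intervalIntegral.norm_integral_le_of_norm_le hα (ae_of_all _ fun θ hθ => ?_)
          (Continuous.intervalIntegrable (by fun_prop) _ _)
        rw [norm_mul, norm_mul, norm_circleMap_zero, norm_I, mul_one, abs_of_pos hR, mul_comm]
        exact mul_le_mul_of_nonneg_left (hbound θ (Set.Ioc_subset_Icc_self hθ)) hR.le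
    _ ≤ R⁻¹ := intervalIntegral_mul_exp_neg_sq_mul_le_inv hR α

theorem norm_cexp_mul_cexp_circleMap (p : ℕ) (a x R θ : ℝ) :
    ‖cexp (I * circleMap 0 R θ * x) * cexp (I * a * circleMap 0 R θ ^ p)‖ =
      Real.exp (-(R * Real.sin θ * x) - a * R ^ p * Real.sin (p * θ)) := by
  rw [circleMap_zero_pow, circleMap_zero, circleMap_zero, norm_mul, norm_exp, norm_exp,
    ← Real.exp_add]
  simp only [mul_re, mul_im, I_re, I_im, ofReal_re, ofReal_im, exp_ofReal_mul_I_re,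
    exp_ofReal_mul_I_im]
  ring_nf

theorem arc_exponent_le {p : ℕ} (hp : 3 ≤ p) {a x R θ : ℝ} (ha : 0 < a) (hR : 1 ≤ R)
    (hRx : π * (|x| + 1) ≤ 2 * a * p * R) (hθ : 0 ≤ θ) (hpθ : p * θ ≤ π / 2) :
    -(R * Real.sin θ * x) - a * R ^ p * Real.sin (p * θ) ≤ -(R ^ 2 * θ) := by
  have h1 : -(R * Real.sin θ * x) ≤ |x| * R ^ 2 * θ :=
    calc -(R * Real.sin θ * x) ≤ |R * Real.sin θ * x| := neg_le_abs _
      _ = R * |Real.sin θ| * |x| := by rw [abs_mul, abs_mul, abs_of_nonneg (by linarith)]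
      _ ≤ R ^ 2 * θ * |x| := by
          gcongr
          · nlinarith
          · exact Real.abs_sin_le_abs.trans (abs_of_nonneg hθ).le
      _ = |x| * R ^ 2 * θ := by ring
  have h2 : (|x| + 1) * R ^ 2 * θ ≤ a * R ^ p * Real.sin (p * θ) :=
    calc (|x| + 1) * R ^ 2 * θ ≤ 2 * a * p * R / π * R ^ 2 * θ := by
          gcongr
          rwa [le_div_iff₀ Real.pi_pos, mul_comm]
      _ = a * R ^ 3 * (2 / π * (p * θ)) := by ring
      _ ≤ a * R ^ p * Real.sin (p * θ) :=
          mul_le_mul (mul_le_mul_of_nonneg_left (pow_le_pow_right₀ hR hp) ha.le)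
            (Real.mul_le_sin (by positivity) hpθ) (by positivity) (by positivity)
  linarith

theorem tendsto_arcIntegral_cexp_mul_cexp_pow {p : ℕ} (hp : 3 ≤ p) {a : ℝ} (ha : 0 < a)
    (x : ℝ) :
    Tendsto (arcIntegral (fun z => cexp (I * z * x) * cexp (I * a * z ^ p)) · (π / (2 * p)))
      atTop (nhds 0) := by
  refine tendsto_arcIntegral_zero_of_norm_le_exp (by positivity) ?_
  filter_upwards [eventually_ge_atTop 1, eventually_ge_atTop (π * (|x| + 1) / (2 * a * p))]
    with R hR hRx θ hθ
  rw [div_le_iff₀ (by positivity)] at hRx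
  have hpθ : p * θ ≤ π / 2 := by
    have hθα := (le_div_iff₀ (by positivity)).1 hθ.2
    linarith
  rw [norm_cexp_mul_cexp_circleMap]
  exact Real.exp_le_exp.2 (arc_exponent_le hp ha hR (by linarith) hθ.1 hpθ)

theorem sq_sub_one_le_pow_of_even {p : ℕ} (hp : 2 ≤ p) (hpeven : Even p) (k : ℝ) :
    k ^ 2 - 1 ≤ k ^ p := by
  rcases le_total |k| 1 with hk | hk
  · have : k ^ 2 ≤ 1 := by rw [← sq_abs]; nlinarith [abs_nonneg k]
    linarith [hpeven.pow_nonneg k]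
  · calc k ^ 2 - 1 ≤ |k| ^ 2 := by rw [sq_abs]; linarith
      _ ≤ |k| ^ p := pow_le_pow_right₀ hk hp
      _ = k ^ p := hpeven.pow_abs k

theorem integrable_cexp_mul_mul_cexp_neg_mul_pow {p : ℕ} (hp : 2 ≤ p) (hpeven : Even p) {a : ℝ}
    (ha : 0 < a) (b : ℂ) :
    Integrable fun k : ℝ => cexp (b * k) * cexp (-a * k ^ p) := by
  refine ((integrable_exp_neg_mul_sq (half_pos ha)).const_mul
    (Real.exp (a + b.re ^ 2 / (2 * a)))).mono' (by fun_prop) (ae_of_all _ fun k => ?_)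
  rw [norm_mul, norm_exp, norm_exp, ← Real.exp_add, ← Real.exp_add, Real.exp_le_exp]
  have hsq : (b.re - a * k) ^ 2 / (2 * a) = b.re ^ 2 / (2 * a) - b.re * k + a / 2 * k ^ 2 := by
    field_simp
    ring
  have hsq_nonneg : 0 ≤ (b.re - a * k) ^ 2 / (2 * a) := by positivity
  have hpow := sq_sub_one_le_pow_of_even hp hpeven k
  simp only [mul_re, ofReal_re, ofReal_im, mul_zero, sub_zero, neg_re, ← ofReal_pow]
  nlinarith

theorem cexp_pi_div_two_mul_I_pow {p : ℕ} (hp : p ≠ 0) :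
    cexp ((π / (2 * p) : ℝ) * I) ^ p = I := by
  have hp' : (p : ℂ) ≠ 0 := Nat.cast_ne_zero.2 hp
  rw [← Complex.exp_nat_mul, show (p : ℂ) * ((π / (2 * p) : ℝ) * I) = π / 2 * I by
    push_cast; field_simp, exp_pi_div_two_mul_I]

theorem integrable_and_tendsto_intervalIntegral_cexp_mul_cexp_pow {p : ℕ} (hp : 3 ≤ p)
    (hpeven : Even p) {a : ℝ} (ha : 0 < a) (x : ℝ) :
    let w := cexp ((π / (2 * p) : ℝ) * I)
    Integrable (fun k : ℝ => cexp (I * (w * k * x)) * cexp (-a * k ^ p)) ∧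
    Tendsto (fun R : ℝ => ∫ k in -R..R, cexp (I * k * x) * cexp (I * a * k ^ p)) atTop
      (nhds (w * ∫ k : ℝ, cexp (I * (w * k * x)) * cexp (-a * k ^ p))) := by
  intro w
  set f : ℂ → ℂ := fun z => cexp (I * z * x) * cexp (I * a * z ^ p)
  have hf_rot : (fun k : ℝ => f (w * k)) =
      fun k : ℝ => cexp (I * (w * k * x)) * cexp (-a * k ^ p) := by
    funext k
    simp only [f, mul_pow, cexp_pi_div_two_mul_I_pow (by omega : p ≠ 0), w]
    congr 2
    · ring
    · linear_combination (a * k ^ p : ℂ) * I_sq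
  have hf_neg : (fun z => f (-z)) =
      fun z => cexp (I * z * (-x : ℝ)) * cexp (I * a * z ^ p) := by
    funext z
    simp only [f, hpeven.neg_pow, ofReal_neg]
    congr 2
    ring
  have hint : Integrable fun k : ℝ => cexp (I * (w * k * x)) * cexp (-a * k ^ p) := by
    convert integrable_cexp_mul_mul_cexp_neg_mul_pow (by omega) hpeven ha (I * w * x) using 4
    ring
  rw [← hf_rot] at hint ⊢
  exact ⟨hint, tendsto_intervalIntegral_of_tendsto_arcIntegral (by fun_prop) hint
    (tendsto_arcIntegral_cexp_mul_cexp_pow hp ha x)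
    (hf_neg ▸ tendsto_arcIntegral_cexp_mul_cexp_pow hp ha (-x))⟩

/-- For `p ≥ 3` even, `c > 0`, `t > 0`, the principal-value limit
`lim_{R→∞} (1/2π) ∫_{-R}^R e^{ikx} e^{ict k^p} dk` exists and equals
`(e^{iπ/(2p)}/2π) ∫_ℝ exp(i e^{iπ/(2p)} k x) exp(-ct k^p) dk`, the latter integral being
absolutely convergent. -/
theorem stmt_1 (p : ℕ) (hp : 3 ≤ p) (hpeven : Even p) (c t x : ℝ) (hc : 0 < c) (ht : 0 < t) :
    Integrable (fun k : ℝ =>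
      Complex.exp (I * (Complex.exp (I * π / (2 * p)) * k * x)) *
        Complex.exp (-(c * t) * k ^ p)) ∧
    Tendsto
      (fun R : ℝ => (1 / (2 * π) : ℂ) *
        ∫ k in (-R)..R, Complex.exp (I * k * x) * Complex.exp (I * c * t * k ^ p))
      atTop
      (nhds ((Complex.exp (I * π / (2 * p)) / (2 * π)) *
        ∫ k : ℝ, Complex.exp (I * (Complex.exp (I * π / (2 * p)) * k * x)) *
          Complex.exp (-(c * t) * k ^ p))) := by
  obtain ⟨hint, hlim⟩ :=
    integrable_and_tendsto_intervalIntegral_cexp_mul_cexp_pow hp hpeven (mul_pos hc ht) x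
  push_cast at hint hlim
  rw [show I * π / (2 * p) = π / (2 * p) * I by ring]
  refine ⟨hint, ?_⟩
  convert hlim.const_mul (1 / (2 * π) : ℂ) using 1
  · simp only [mul_assoc]
  · congr 1
    ring
end

section
/- Let p ≥ 3, α ∈ ℂ with |e^{α s x^p}| ≤ 1 for all x ∈ ℝ, s ≥ 0, let ν ∈ M(ℝⁿ) and 0 ≤ t₁ < ... < t_n < t. Then ∫_{ℝⁿ} F(x₁,...,x_n) ∏_{k=1}^n G^p_{t_{k+1}-t_k}(x_{k+1}, x_k) dx₁...dx_n = ∫_{ℝⁿ} exp(α ∑_{k=1}^n (∑_{j=1}^k y_j)^p (t_{k+1}-t_k)) dν(y₁,...,y_n), where F is the Fourier transform of ν, x_{n+1} = 0, t_{n+1} = t, and G^p_s(x,y) = g^p_s(x-y) with g^p_s the Fourier transform of k ↦ e^{α s k^p}. -/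
/-!
The substitution `ξ_k = x_{k+1} - x_k` (with `x_{n+1} = 0`) is linear with determinant `±1`, and
summation by parts turns the phase `∑ y_k x_k` into `-∑ ξ_k Y_k` with `Y_k = ∑_{j ≤ k} y_j`.
After Fubini (the phase has modulus one and the kernel product is integrable), the `x`-integral
therefore factors into the one-dimensional Fourier integrals of the kernels
`g_{t_{k+1} - t_k}`, evaluated at `Y_k`, which are `exp (α (t_{k+1} - t_k) Y_k ^ p)`.
-/

open MeasureTheory Complex Finset

theorem Fin.sum_partialSum_mul_sub {R : Type*} [CommRing R] {n : ℕ} (y : Fin n → R)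
    (X : Fin (n + 1) → R) :
    ∑ k, (∑ j ∈ Iic k, y j) * (X k.succ - X k.castSucc) =
      (∑ j, y j) * X (Fin.last n) - ∑ j, y j * X j.castSucc := by
  induction n with
  | zero => simp
  | succ n ih =>
    have := ih (fun j => y j.castSucc) (fun j => X j.castSucc)
    rw [Fin.sum_univ_castSucc, Fin.sum_univ_castSucc y, Fin.sum_univ_castSucc (fun j => y j * _)]
    simp only [Fin.sum_Iic_castSucc, Fin.succ_castSucc, this, ← Fin.top_eq_last, Iic_top]
    rw [Fin.sum_univ_castSucc y]
    simp only [Fin.top_eq_last, Fin.succ_last]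
    ring

theorem Fin.snoc_zero_eq_sum {R : Type*} [CommRing R] {n : ℕ} (x : Fin n → R) (i : Fin (n + 1)) :
    (Fin.snoc x 0 : Fin (n + 1) → R) i = ∑ j, if i = j.castSucc then x j else 0 := by
  induction i using Fin.lastCases with
  | last => simp [eq_comm, Fin.castSucc_ne_last]
  | cast i => simp [Fin.castSucc_inj]

theorem ContinuousLinearEquiv.measurePreserving_of_abs_det_eq_one {E : Type*}
    [NormedAddCommGroup E] [NormedSpace ℝ E] [MeasurableSpace E] [BorelSpace E]
    [FiniteDimensional ℝ E] (μ : Measure E) [μ.IsAddHaarMeasure] (f : E ≃L[ℝ] E)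
    (hf : |LinearMap.det (f : E →ₗ[ℝ] E)| = 1) : MeasurePreserving f μ μ := by
  refine ⟨f.continuous.measurable, ?_⟩
  have hdet : LinearMap.det (f : E →ₗ[ℝ] E) ≠ 0 := by
    intro h
    simp [h] at hf
  simpa [abs_inv, hf] using Measure.map_linearMap_addHaar_eq_smul_addHaar μ hdet

theorem integral_integral_mul_swap {α β 𝕜 : Type*} [RCLike 𝕜] [MeasurableSpace α]
    [MeasurableSpace β] {μ : Measure α} {ν : Measure β} [SFinite μ] [SFinite ν] {φ : α → β → 𝕜}
    {K : α → 𝕜} {ρ : β → 𝕜} (hφ : AEStronglyMeasurable (Function.uncurry φ) (μ.prod ν))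
    (hφ_le : ∀ x y, ‖φ x y‖ ≤ 1) (hK : Integrable K μ) (hρ : Integrable ρ ν) :
    ∫ x, (∫ y, φ x y * ρ y ∂ν) * K x ∂μ = ∫ y, (∫ x, φ x y * K x ∂μ) * ρ y ∂ν := by
  have hint : Integrable (Function.uncurry fun x y => φ x y * ρ y * K x) (μ.prod ν) := by
    refine (hK.mul_prod hρ).mono ((hφ.mul hρ.1.comp_snd).mul hK.1.comp_fst) ?_
    refine Filter.Eventually.of_forall fun z => ?_
    simp only [Function.uncurry, norm_mul]
    nlinarith [hφ_le z.1 z.2, mul_nonneg (norm_nonneg (ρ z.2)) (norm_nonneg (K z.1))]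
  simp_rw [← integral_mul_const]
  rw [integral_integral_swap hint]
  exact integral_congr_ae (Filter.Eventually.of_forall fun y => integral_congr_ae
    (Filter.Eventually.of_forall fun x => by simp only; ring))

section ForwardDiff

open Matrix

variable {R : Type*} [CommRing R] {n : ℕ}

variable (R n) in
def forwardDiffMatrix : Matrix (Fin n) (Fin n) R :=
  Matrix.of fun k j => (if k.succ = j.castSucc then 1 else 0) - if k = j then 1 else 0

theorem forwardDiffMatrix_mulVec (x : Fin n → R) (k : Fin n) :
    (forwardDiffMatrix R n *ᵥ x) k =
      (Fin.snoc x (0 : R) : Fin (n + 1) → R) k.succ -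
        (Fin.snoc x (0 : R) : Fin (n + 1) → R) k.castSucc := by
  simp [forwardDiffMatrix, mulVec, dotProduct, sub_mul, Fin.snoc_zero_eq_sum]

theorem isUpperTriangular_forwardDiffMatrix : (forwardDiffMatrix R n).IsUpperTriangular := by
  intro k j (hjk : j < k)
  have hsucc : k.succ ≠ j.castSucc := fun h => by
    have := congrArg Fin.val h
    simp at this
    omega
  simp [forwardDiffMatrix, hsucc, hjk.ne']

theorem det_forwardDiffMatrix : (forwardDiffMatrix R n).det = (-1) ^ n := by
  rw [det_of_isUpperTriangular isUpperTriangular_forwardDiffMatrix]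
  simp [forwardDiffMatrix, Fin.castSucc_lt_succ.ne']

variable (n) in
noncomputable def forwardDiffEquiv : (Fin n → ℝ) ≃L[ℝ] (Fin n → ℝ) :=
  (LinearMap.equivOfDetNeZero (toLin' (forwardDiffMatrix ℝ n))
    (by simp [LinearMap.det_toLin', det_forwardDiffMatrix])).toContinuousLinearEquiv

theorem forwardDiffEquiv_apply (x : Fin n → ℝ) (k : Fin n) :
    forwardDiffEquiv n x k =
      (Fin.snoc x (0 : ℝ) : Fin (n + 1) → ℝ) k.succ -
        (Fin.snoc x (0 : ℝ) : Fin (n + 1) → ℝ) k.castSucc :=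
  forwardDiffMatrix_mulVec x k

variable (n) in
theorem measurePreserving_forwardDiffEquiv :
    MeasurePreserving (forwardDiffEquiv n) volume volume :=
  (forwardDiffEquiv n).measurePreserving_of_abs_det_eq_one volume <| by
    simp [forwardDiffEquiv, LinearMap.det_toLin', det_forwardDiffMatrix]

theorem sum_partialSum_mul_forwardDiffEquiv (y x : Fin n → ℝ) :
    ∑ k, (∑ j ∈ Iic k, y j) * forwardDiffEquiv n x k = -∑ k, y k * x k := by
  simp only [forwardDiffEquiv_apply, Fin.sum_partialSum_mul_sub]
  simp

theorem integral_exp_mul_prod_forwardDiffEquiv (y : Fin n → ℝ) (f : Fin n → ℝ → ℂ) :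
    ∫ x : Fin n → ℝ, exp (I * ↑(∑ k, y k * x k)) * ∏ k, f k (forwardDiffEquiv n x k) =
      ∏ k, ∫ ξ : ℝ, exp (-(I * ξ * ↑(∑ j ∈ Iic k, y j))) * f k ξ := by
  have hphase : ∀ x : Fin n → ℝ, exp (I * ↑(∑ k, y k * x k)) =
      ∏ k, exp (-(I * ↑(forwardDiffEquiv n x k) * ↑(∑ j ∈ Iic k, y j))) := fun x => by
    rw [← exp_sum, ← neg_neg (∑ k, y k * x k), ← sum_partialSum_mul_forwardDiffEquiv,
      ofReal_neg, ofReal_sum, mul_neg, mul_sum, ← sum_neg_distrib]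
    exact congrArg exp (sum_congr rfl fun k _ => by rw [ofReal_mul]; ring)
  simp_rw [hphase, ← prod_mul_distrib]
  rw [(measurePreserving_forwardDiffEquiv n).integral_comp
      (forwardDiffEquiv n).toHomeomorph.measurableEmbedding
      (fun ξ => ∏ k, exp (-(I * ↑(ξ k) * ↑(∑ j ∈ Iic k, y j))) * f k (ξ k)),
    volume_pi,
    integral_fintype_prod_eq_prod (fun k (ξ : ℝ) => exp (-(I * ξ * ↑(∑ j ∈ Iic k, y j))) * f k ξ)]

end ForwardDiff

theorem stmt_11_general (p : ℕ) (α : ℂ)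
    (n : ℕ)
    (ts : Fin (n + 1) → ℝ) (hmono : StrictMono ts)
    (g : ℝ → ℝ → ℂ) (hgInt : ∀ s : ℝ, 0 < s → Integrable (g s))
    (hgFT : ∀ s : ℝ, 0 < s → ∀ y : ℝ,
      ∫ ξ : ℝ, Complex.exp (-(I * ξ * y)) * g s ξ = Complex.exp (α * s * y ^ p))
    (P : Measure (Fin n → ℝ)) [IsFiniteMeasure P] (ρ : (Fin n → ℝ) → ℂ)
    (hρ : Integrable ρ P) :
    ∫ x : Fin n → ℝ,
        (∫ y, Complex.exp (I * (∑ k, y k * x k : ℝ)) * ρ y ∂P) *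
          ∏ k : Fin n,
            g (ts k.succ - ts k.castSucc)
              ((Fin.snoc x (0:ℝ) : Fin (n + 1) → ℝ) k.succ - (Fin.snoc x (0:ℝ) : Fin (n + 1) → ℝ) k.castSucc) =
      ∫ y, Complex.exp (α * ∑ k : Fin n,
          ((∑ j ∈ Finset.Iic k, y j : ℝ) : ℂ) ^ p *
            ((ts k.succ - ts k.castSucc : ℝ) : ℂ)) * ρ y ∂P := by
  have hs : ∀ k : Fin n, 0 < ts k.succ - ts k.castSucc := fun k =>
    sub_pos.2 (hmono k.castSucc_lt_succ)
  have hK : Integrable fun x => ∏ k, g (ts k.succ - ts k.castSucc) (forwardDiffEquiv n x k) :=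
    (measurePreserving_forwardDiffEquiv n).integrable_comp_emb
      (forwardDiffEquiv n).toHomeomorph.measurableEmbedding |>.2 <|
      Integrable.fintype_prod fun k => hgInt _ (hs k)
  have hphase_cont : Continuous fun z : (Fin n → ℝ) × (Fin n → ℝ) =>
      exp (I * ↑(∑ k, z.2 k * z.1 k)) := by fun_prop
  simp only [← forwardDiffEquiv_apply]
  rw [integral_integral_mul_swap (φ := fun x y => exp (I * ↑(∑ k, y k * x k)))
    hphase_cont.aestronglyMeasurable (fun x y => by rw [mul_comm, norm_exp_ofReal_mul_I]) hK hρ]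
  refine integral_congr_ae (Filter.Eventually.of_forall fun y => ?_)
  simp only [integral_exp_mul_prod_forwardDiffEquiv, fun k => hgFT _ (hs k), ← exp_sum, mul_sum]
  congr 2
  exact sum_congr rfl fun k _ => by ring

/-- cylindrical function lemma: let `p ≥ 3`, `α` with `|e^{α s x^p}| ≤ 1`,
`ν ∈ M(ℝⁿ)` (represented by an integrable density `ρ` w.r.t. a finite measure `P`),
`0 ≤ t₁ < … < t_n < t_{n+1} = t` (encoded as `ts : Fin (n+1) → ℝ`, `ts k = t_{k+1}`), and let
`g^p_s = g s` be the fundamental solution kernel: an integrable function with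
`∫ e^{-iξy} g s ξ dξ = e^{α s y^p}`, and `G^p_s(x,y) = g s (x-y)`.  Then, with `x_{n+1} = 0`,
`∫_{ℝⁿ} F(x₁,…,x_n) ∏_k G^p_{t_{k+1}-t_k}(x_{k+1},x_k) dx
  = ∫_{ℝⁿ} exp(α ∑_k (∑_{j≤k} y_j)^p (t_{k+1}-t_k)) dν(y)`,
where `F` is the Fourier transform of `ν`. -/
theorem stmt_11 (p : ℕ) (hp : 3 ≤ p) (α : ℂ)
    (hα : ∀ (x s : ℝ), 0 ≤ s → ‖Complex.exp (α * s * x ^ p)‖ ≤ 1)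
    (t : ℝ) (ht : 0 < t) (n : ℕ)
    (ts : Fin (n + 1) → ℝ) (h0 : 0 ≤ ts 0) (hmono : StrictMono ts)
    (hlast : ts (Fin.last n) = t)
    (g : ℝ → ℝ → ℂ) (hgInt : ∀ s : ℝ, 0 < s → Integrable (g s))
    (hgFT : ∀ s : ℝ, 0 < s → ∀ y : ℝ,
      ∫ ξ : ℝ, Complex.exp (-(I * ξ * y)) * g s ξ = Complex.exp (α * s * y ^ p))
    (P : Measure (Fin n → ℝ)) [IsFiniteMeasure P] (ρ : (Fin n → ℝ) → ℂ)
    (hρ : Integrable ρ P) :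
    ∫ x : Fin n → ℝ,
        (∫ y, Complex.exp (I * (∑ k, y k * x k : ℝ)) * ρ y ∂P) *
          ∏ k : Fin n,
            g (ts k.succ - ts k.castSucc)
              ((Fin.snoc x (0:ℝ) : Fin (n + 1) → ℝ) k.succ - (Fin.snoc x (0:ℝ) : Fin (n + 1) → ℝ) k.castSucc) =
      ∫ y, Complex.exp (α * ∑ k : Fin n,
          ((∑ j ∈ Finset.Iic k, y j : ℝ) : ℂ) ^ p *
            ((ts k.succ - ts k.castSucc : ℝ) : ℂ)) * ρ y ∂P :=
  stmt_11_general p α n ts hmono g hgInt hgFT P ρ hρ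
end

section
/- Let ν ∈ M(ℝ) with ‖ν‖ < ∞, t > 0, and define the measure μ_V on B_p by ∫ f dμ_V = ∫_0^t ∫_ℝ e^{ixy} f(y·v_s) dν(y) ds for bounded continuous f, where v_s ∈ B_p is the evaluation representer at s. Then ‖μ_V‖_{M(B_p)} ≤ t‖ν‖_{M(ℝ)}, and the map η ↦ ∫_0^t V(x+η(s)) ds on B_q, where V is the Fourier transform of ν, equals the Fourier transform of μ_V. -/
open MeasureTheory Complex

/-!
For each `s` the integrand `e^{ixy} f(y·v_s)` has modulus at most `1`, so the inner integral is
bounded by `‖ν‖`, and integrating over `(0, t]` contributes the factor `t`. The Fourier identity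
holds already for each `s` and `y`: pairing `η` with `y·v_s` gives `y·η(s)`, since `v_s'` is
`-1` on `(s, t]` and `0` elsewhere.
-/

theorem norm_integral_mul_le_integral_norm_of_norm_le_one {α 𝕜 : Type*} [MeasurableSpace α]
    [RCLike 𝕜] {μ : Measure α} {g ρ : α → 𝕜} (hρ : Integrable ρ μ) (hg : ∀ y, ‖g y‖ ≤ 1) :
    ‖∫ y, g y * ρ y ∂μ‖ ≤ ∫ y, ‖ρ y‖ ∂μ :=
  norm_integral_le_of_norm_le hρ.norm <| .of_forall fun y => by
    simpa [norm_mul] using mul_le_of_le_one_left (norm_nonneg (ρ y)) (hg y)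

theorem norm_cexp_I_mul_ofReal_mul_ofReal (x y : ℝ) : ‖cexp (I * x * y)‖ = 1 := by
  simpa [mul_assoc] using norm_exp_I_mul_ofReal (x * y)

theorem setIntegral_mul_indicator_one_of_subset {X : Type*} [MeasurableSpace X] {μ : Measure X}
    {A B : Set X} (hA : MeasurableSet A) (hAB : A ⊆ B) (w : X → ℝ) :
    ∫ τ in B, w τ * A.indicator (fun _ => (1 : ℝ)) τ ∂μ = ∫ τ in A, w τ ∂μ := by
  simp_rw [← Set.indicator_mul_right, mul_one]
  rw [setIntegral_indicator hA, Set.inter_eq_right.mpr hAB]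

theorem setIntegral_Ioc_mul_const_mul_neg_indicator_Ioc (w : ℝ → ℝ) {s t : ℝ} (hs : 0 ≤ s)
    (y : ℝ) :
    ∫ τ in Set.Ioc 0 t, w τ * (y * -(Set.Ioc s t).indicator (fun _ => (1 : ℝ)) τ) =
      y * -∫ u in Set.Ioc s t, w u := by
  have hpoint : ∀ τ, w τ * (y * -(Set.Ioc s t).indicator (fun _ => (1 : ℝ)) τ) =
      -y * (w τ * (Set.Ioc s t).indicator (fun _ => (1 : ℝ)) τ) := fun τ => by ring
  simp_rw [hpoint]
  rw [integral_const_mul, setIntegral_mul_indicator_one_of_subset measurableSet_Ioc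
    (Set.Ioc_subset_Ioc_left hs)]
  ring

theorem stmt_16_general (q t x : ℝ) (ht : 0 < t)
    (P : Measure ℝ) (ρ : ℝ → ℂ) (hρ : Integrable ρ P) :
    -- total variation bound ‖μ_V‖ ≤ t ‖ν‖
    (∀ f : (ℝ → ℝ) → ℂ, Continuous f → (∀ γ : ℝ → ℝ, ‖f γ‖ ≤ 1) →
      ‖∫ s in Set.Ioc (0:ℝ) t, ∫ y, Complex.exp (I * x * y) *
          f (fun τ => y * min (t - s) (t - τ)) * ρ y ∂P‖ ≤ t * ∫ y, ‖ρ y‖ ∂P) ∧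
    -- the Fourier transform of μ_V is η ↦ ∫_0^t V(x + η(s)) ds
    (∀ w : ℝ → ℝ, MemLp w (ENNReal.ofReal q) (volume.restrict (Set.Icc 0 t)) →
      (∫ s in Set.Ioc (0:ℝ) t, ∫ y, Complex.exp (I * x * y) *
          Complex.exp (I * ((∫ τ in Set.Ioc (0:ℝ) t,
            w τ * (y * (-(Set.Ioc s t).indicator (fun _ => (1:ℝ)) τ))) : ℝ)) * ρ y ∂P) =
        ∫ s in Set.Ioc (0:ℝ) t,
          ∫ y, Complex.exp (I * ((x + -∫ u in Set.Ioc s t, w u : ℝ)) * y) * ρ y ∂P) := by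
  refine ⟨fun f _ hf => ?_, fun w _ => ?_⟩
  · have hinner : ∀ s ∈ Set.Ioc 0 t, ‖∫ y, cexp (I * x * y) *
        f (fun τ => y * min (t - s) (t - τ)) * ρ y ∂P‖ ≤ ∫ y, ‖ρ y‖ ∂P := fun s _ =>
      norm_integral_mul_le_integral_norm_of_norm_le_one hρ fun y => by
        simpa [norm_cexp_I_mul_ofReal_mul_ofReal] using hf _
    calc _ ≤ (∫ y, ‖ρ y‖ ∂P) * volume.real (Set.Ioc 0 t) :=
          norm_setIntegral_le_of_norm_le_const measure_Ioc_lt_top hinner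
      _ = t * ∫ y, ‖ρ y‖ ∂P := by rw [Real.volume_real_Ioc_of_le ht.le, sub_zero, mul_comm]
  · refine setIntegral_congr_fun measurableSet_Ioc fun s hs => integral_congr_ae <|
      .of_forall fun y => ?_
    simp only [setIntegral_Ioc_mul_const_mul_neg_indicator_Ioc w hs.1.le, ← Complex.exp_add]
    congr 2
    push_cast
    ring

/-- let `ν ∈ M(ℝ)` (represented by an integrable density `ρ` w.r.t. a finite
measure `P`, with `‖ν‖ = ∫‖ρ‖dP`), `t > 0`, `x ∈ ℝ`, and define the measure `μ_V` on `B_p` by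
`∫ f dμ_V = ∫_0^t ∫_ℝ e^{ixy} f(y·v_s) dν(y) ds`, where `v_s(τ) = min(t-s,t-τ)` is the
evaluation representer (with derivative `-χ_{(s,t]}`).  Then `‖μ_V‖ ≤ t‖ν‖` (stated by
testing against continuous functions `f` bounded by `1` on the path space), and the map
`η ↦ ∫_0^t V(x+η(s)) ds` on `B_q` (with `V = ν̂`, and `η(s) = -∫_s^t η'`) is the Fourier
transform of `μ_V` (the pairing `⟨η, y·v_s⟩ = ∫_0^t η'(τ)·y·v_s'(τ) dτ`). -/
theorem stmt_16 (p q t x : ℝ) (hp : 1 < p) (hpq : 1 / p + 1 / q = 1) (ht : 0 < t)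
    (P : Measure ℝ) [IsFiniteMeasure P] (ρ : ℝ → ℂ) (hρ : Integrable ρ P) :
    -- total variation bound ‖μ_V‖ ≤ t ‖ν‖
    (∀ f : (ℝ → ℝ) → ℂ, Continuous f → (∀ γ : ℝ → ℝ, ‖f γ‖ ≤ 1) →
      ‖∫ s in Set.Ioc (0:ℝ) t, ∫ y, Complex.exp (I * x * y) *
          f (fun τ => y * min (t - s) (t - τ)) * ρ y ∂P‖ ≤ t * ∫ y, ‖ρ y‖ ∂P) ∧
    -- the Fourier transform of μ_V is η ↦ ∫_0^t V(x + η(s)) ds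
    (∀ w : ℝ → ℝ, MemLp w (ENNReal.ofReal q) (volume.restrict (Set.Icc 0 t)) →
      (∫ s in Set.Ioc (0:ℝ) t, ∫ y, Complex.exp (I * x * y) *
          Complex.exp (I * ((∫ τ in Set.Ioc (0:ℝ) t,
            w τ * (y * (-(Set.Ioc s t).indicator (fun _ => (1:ℝ)) τ))) : ℝ)) * ρ y ∂P) =
        ∫ s in Set.Ioc (0:ℝ) t,
          ∫ y, Complex.exp (I * ((x + -∫ u in Set.Ioc s t, w u : ℝ)) * y) * ρ y ∂P) :=
  stmt_16_general q t x ht P ρ hρ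
end
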